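/- Let t > 2, G = D_{4t} = ⟨a, b : a^{2t} = b² = 1, bab = a^{−1}⟩ indexed by g_k = a^{k−1} (1 ≤ k ≤ 2t) and g_k = a^{k−2t−1}b (2t+1 ≤ k ≤ 4t), ρ the ±1 function whose matrix is the block matrix [[A,A],[B,−B]] with A_{i,j} = 1 iff i+j ≤ 2t+1 and B_{i,j} = 1 iff j ≤ i (for 1 ≤ i,j ≤ 2t), and S = G ∖ {1, a^{2t−2}b, a^{2t−1}b}. Let J ⊆ ℚ[x_d : d ∈ S] be the ideal generated by x_d² − x_d for d ∈ S together with, for each s ∈ {2,…,t}, the polynomial Σ_{h∈G} ρ(g_s,h) · ∏_{d ∈ S ∩ {h, g_s·h}} (1 − 2x_d). Then the number of tuples (x_d)_{d∈S} ∈ {0,1}^S for which the cocyclic matrix of ψ(g,h) = ρ(g,h)·∏_{d∈S} ∂_d(g,h)^{x_d} is Hadamard equals the dimension of ℚ[x_d : d ∈ S]/J as a ℚ-vector space. -/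

import Mathlib

/-!
The function `ψ_x = ρ · ∏ ∂_d^{x_d}` is a ±1 cocycle, and for a ±1 cocycle the inner product of
the rows `u k` and `k` of `M_ψ` is `±` the sum of row `u`; so `M_ψ` is Hadamard iff every row
`g ≠ 1` sums to zero. In `D_{4t}` the rows of the involutions `a^t` and `a^i b` always vanish
(left multiplication by the involution reverses the sign of the row of `ρ` and fixes every
`∂_d(g, ·)`), and the rows of `g` and `g⁻¹` vanish together, so only the rows of
`g_2, …, g_t = a, …, a^{t-1}` matter. For `x ∈ {0,1}^S` and `g ≠ 1`, the row polynomial of `g`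
evaluated at `x` is, up to the sign `∏ δ_d(g)^{x_d}`, the sum of row `g` of `M_ψ`.

Modulo the Boolean relations `x_d² = x_d`, the polynomial ring has the idempotents
`∏_{d ∈ q} x_d ∏_{d ∉ q} (1 - x_d)`, `q ⊆ S`, which sum to `1` and act on any `f` by `f(q)`;
hence the quotient by `J` is the algebra of functions on the common zeros of the row polynomials
in `{0,1}^S`, whose dimension is their number.
-/

open Matrix MvPolynomial

/-- The characteristic map `δ_d`. -/
def charMap {G : Type*} [DecidableEq G] (d x : G) : ℤ := if x = d then -1 else 1

/-- The elementary coboundary `∂_d`. -/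
def elemCob {G : Type*} [Group G] [DecidableEq G] (d g h : G) : ℤ :=
  charMap d g * charMap d h * charMap d (g * h)

/-- The ordering `g_k` of `D_{4t}`: `g_k = a^{k-1}` for `1 ≤ k ≤ 2t` and
`g_k = a^{k-2t-1}·b` for `2t+1 ≤ k ≤ 4t`, where `a = r 1` and `b = sr 0`. -/
def dihEl (t k : ℕ) : DihedralGroup (2 * t) :=
  if k ≤ 2 * t then DihedralGroup.r ((k - 1 : ℕ) : ZMod (2 * t))
  else DihedralGroup.r ((k - 2 * t - 1 : ℕ) : ZMod (2 * t)) * DihedralGroup.sr 0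

/-- The index `k ∈ {1,…,4t}` of a dihedral group element in the above ordering
(`a^m = r m` has index `m+1`; `a^m·b = sr (-m)` has index `2t+m+1`). -/
def dihIdx {t : ℕ} : DihedralGroup (2 * t) → ℕ
  | DihedralGroup.r i => i.val + 1
  | DihedralGroup.sr j => 2 * t + (-j).val + 1

/-- The entries of the block matrix `[[A,A],[B,−B]]`, where `A_{i,j} = 1` iff
`i+j ≤ 2t+1` and `B_{i,j} = 1` iff `j ≤ i`, read through the indexing of `D_{4t}`. -/
def rhoIdxD (t i j : ℕ) : ℤ :=
  if i ≤ 2 * t then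
    (if j ≤ 2 * t then (if i + j ≤ 2 * t + 1 then 1 else -1)
     else (if i + (j - 2 * t) ≤ 2 * t + 1 then 1 else -1))
  else
    (if j ≤ 2 * t then (if j ≤ i - 2 * t then 1 else -1)
     else (if j ≤ i then -1 else 1))

/-- The fixed representative cocycle `ρ = β₂·β₃` over `D_{4t}`. -/
def rhoD (t : ℕ) (g h : DihedralGroup (2 * t)) : ℤ := rhoIdxD t (dihIdx g) (dihIdx h)

/-- The coboundary index set `S = G ∖ {1, a^{2t−2}b, a^{2t−1}b}`. -/
def SD (t : ℕ) [NeZero (2 * t)] : Finset (DihedralGroup (2 * t)) :=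
  Finset.univ \ {(1 : DihedralGroup (2 * t)),
    DihedralGroup.r ((2 * t - 2 : ℕ) : ZMod (2 * t)) * DihedralGroup.sr 0,
    DihedralGroup.r ((2 * t - 1 : ℕ) : ZMod (2 * t)) * DihedralGroup.sr 0}

/-- The row polynomial `Σ_{h∈G} ρ(g_s,h) · ∏_{d ∈ S ∩ {h, g_s·h}} (1 - 2x_d)`. -/
noncomputable def rowPolyD (t : ℕ) [NeZero (2 * t)] (s : ℕ) :
    MvPolynomial {d : DihedralGroup (2 * t) // d ∈ SD t} ℚ :=
  ∑ h : DihedralGroup (2 * t), MvPolynomial.C ((rhoD t (dihEl t s) h : ℤ) : ℚ) *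
    ∏ d : {d : DihedralGroup (2 * t) // d ∈ SD t},
      if (d : DihedralGroup (2 * t)) = h ∨ (d : DihedralGroup (2 * t)) = dihEl t s * h then
        (1 - 2 * MvPolynomial.X d) else 1

/-- The ideal `J_{D_{4t}}` of Theorem 5. -/
noncomputable def idealD (t : ℕ) [NeZero (2 * t)] :
    Ideal (MvPolynomial {d : DihedralGroup (2 * t) // d ∈ SD t} ℚ) :=
  Ideal.span
    ({p | ∃ d : {d : DihedralGroup (2 * t) // d ∈ SD t},
        p = MvPolynomial.X d ^ 2 - MvPolynomial.X d} ∪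
     {p | ∃ s : ℕ, 2 ≤ s ∧ s ≤ t ∧ p = rowPolyD t s})

structure IsSignCocycle {G : Type*} [Mul G] (ψ : G → G → ℤ) : Prop where
  mul_self : ∀ g h, ψ g h * ψ g h = 1
  cocycle : ∀ g h k, ψ g h * ψ (g * h) k = ψ h k * ψ g (h * k)

namespace IsSignCocycle

variable {G : Type*} [Group G] {ψ φ : G → G → ℤ}

lemma one : IsSignCocycle fun _ _ : G => (1 : ℤ) :=
  ⟨fun _ _ => one_mul 1, fun _ _ _ => rfl⟩

lemma mul (hψ : IsSignCocycle ψ) (hφ : IsSignCocycle φ) :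
    IsSignCocycle fun g h => ψ g h * φ g h where
  mul_self g h := by
    rw [mul_mul_mul_comm, hψ.mul_self, hφ.mul_self, one_mul]
  cocycle g h k := by
    rw [mul_mul_mul_comm, hψ.cocycle, hφ.cocycle, mul_mul_mul_comm]

lemma pow (hψ : IsSignCocycle ψ) (n : ℕ) : IsSignCocycle fun g h => ψ g h ^ n := by
  induction n with
  | zero => simpa using one
  | succ n ih => simpa only [pow_succ] using ih.mul hψ

lemma prod {ι : Type*} (s : Finset ι) {ψ : ι → G → G → ℤ} (hψ : ∀ i ∈ s, IsSignCocycle (ψ i)) :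
    IsSignCocycle fun g h => ∏ i ∈ s, ψ i g h := by
  induction s using Finset.cons_induction with
  | empty => simpa using one
  | cons i s hi ih =>
    simp only [Finset.prod_cons]
    exact (hψ i (Finset.mem_cons_self i s)).mul (ih fun j hj => hψ j (Finset.mem_cons_of_mem hj))

lemma apply_one_left (hψ : IsSignCocycle ψ) (h : G) : ψ 1 h = ψ 1 1 := by
  have h₁ := hψ.cocycle 1 1 h
  simp only [one_mul] at h₁
  linear_combination (ψ 1 1) * h₁ - ψ 1 h * hψ.mul_self 1 1 + ψ 1 1 * hψ.mul_self 1 h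

lemma apply_mul_mul_apply (hψ : IsSignCocycle ψ) (u k h : G) :
    ψ (u * k) h * ψ k h = ψ u k * ψ u (k * h) := by
  linear_combination (ψ u k * ψ k h) * hψ.cocycle u k h - ψ (u * k) h * ψ k h * hψ.mul_self u k
    + ψ u k * ψ u (k * h) * hψ.mul_self k h

variable [Fintype G]

lemma sum_apply_mul_apply_eq (hψ : IsSignCocycle ψ) (u k : G) :
    ∑ h, ψ (u * k) h * ψ k h = ψ u k * ∑ h, ψ u h := by
  simp only [hψ.apply_mul_mul_apply, ← Finset.mul_sum]
  congr 1
  exact Fintype.sum_equiv (Equiv.mulLeft k) _ _ fun _ => rfl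

theorem mul_transpose_eq_card_smul_one_iff [DecidableEq G] (hψ : IsSignCocycle ψ) :
    of ψ * (of ψ)ᵀ = (Fintype.card G : ℤ) • 1 ↔ ∀ g ≠ 1, ∑ h, ψ g h = 0 := by
  have entry (g k : G) : (of ψ * (of ψ)ᵀ) g k = ∑ h, ψ (g * k⁻¹ * k) h * ψ k h := by
    simp [Matrix.mul_apply]
  constructor
  · intro hM g hg
    have h₁ := entry g 1
    rw [hM, hψ.sum_apply_mul_apply_eq] at h₁
    simp only [Matrix.smul_apply, one_apply_ne hg, smul_zero, inv_one, mul_one] at h₁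
    refine (mul_eq_zero.mp h₁.symm).resolve_left fun h₀ => ?_
    simpa [h₀] using hψ.mul_self g 1
  · intro hrows
    ext g k
    by_cases hgk : g = k
    · subst hgk
      simp [Matrix.mul_apply, hψ.mul_self]
    · rw [entry, hψ.sum_apply_mul_apply_eq, hrows _ (mul_inv_eq_one.not.mpr hgk)]
      simp [one_apply_ne hgk]

lemma sum_inv_eq_zero (hψ : IsSignCocycle ψ) {g : G} (hg : ∑ h, ψ g h = 0) :
    ∑ h, ψ g⁻¹ h = 0 := by
  have key (k : G) : ψ g⁻¹ k = ψ g⁻¹ g * ψ 1 1 * ψ g (g⁻¹ * k) := by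
    have h₁ := hψ.cocycle g⁻¹ g (g⁻¹ * k)
    rw [inv_mul_cancel, mul_inv_cancel_left, hψ.apply_one_left] at h₁
    linear_combination -ψ g (g⁻¹ * k) * h₁ - ψ g⁻¹ k * hψ.mul_self g (g⁻¹ * k)
  rw [Finset.sum_congr rfl fun k _ => key k, ← Finset.mul_sum]
  rw [Fintype.sum_equiv (Equiv.mulLeft g⁻¹) (fun k => ψ g (g⁻¹ * k)) (ψ g) fun _ => rfl, hg,
    mul_zero]

end IsSignCocycle

lemma Fintype.sum_eq_zero_of_apply_mul_left_eq_neg {G R : Type*} [Group G] [Fintype G]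
    [NonAssocRing R] [NoZeroDivisors R] [CharZero R] {f : G → R} (g : G)
    (hf : ∀ h, f (g * h) = -f h) : ∑ h, f h = 0 := by
  have h₁ := Fintype.sum_equiv (Equiv.mulLeft g) _ f fun _ => rfl
  simp only [Equiv.coe_mulLeft, hf, Finset.sum_neg_distrib] at h₁
  exact CharZero.neg_eq_self_iff.mp h₁

section Coboundary

variable {G : Type*} [DecidableEq G]

lemma charMap_mul_self (d x : G) : charMap d x * charMap d x = 1 := by
  unfold charMap; split_ifs <;> norm_num

lemma charMap_ne_zero (d x : G) : charMap d x ≠ 0 := by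
  unfold charMap; split_ifs <;> norm_num

lemma charMap_mul_charMap_of_ne {d h h' : G} (hne : h ≠ h') :
    charMap d h * charMap d h' = if d = h ∨ d = h' then -1 else 1 := by
  unfold charMap
  by_cases h₁ : h = d <;> by_cases h₂ : h' = d <;> simp_all [eq_comm]

variable [Group G]

lemma isSignCocycle_elemCob (d : G) : IsSignCocycle (elemCob d) where
  mul_self g h := by
    unfold elemCob
    rw [mul_mul_mul_comm, mul_mul_mul_comm (charMap d g), charMap_mul_self, charMap_mul_self,
      charMap_mul_self, one_mul, one_mul]
  cocycle g h k := by
    unfold elemCob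
    rw [← mul_assoc g h k]
    linear_combination (charMap d g * charMap d h * charMap d k * charMap d (g * h * k)) *
      (charMap_mul_self d (g * h) - charMap_mul_self d (h * k))

lemma elemCob_mul_left_of_mul_self (d : G) {g : G} (hg : g * g = 1) (h : G) :
    elemCob d g (g * h) = elemCob d g h := by
  rw [elemCob, elemCob, ← mul_assoc, hg, one_mul]
  ring

lemma elemCob_cast_pow {d g : G} (hg : g ≠ 1) (h : G) {n : ℕ} (hn : n = 0 ∨ n = 1) :
    ((elemCob d g h : ℤ) : ℚ) ^ n =
      (charMap d g : ℚ) ^ n * if d = h ∨ d = g * h then 1 - 2 * (n : ℚ) else 1 := by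
  rcases hn with rfl | rfl
  · simp
  · have hne : h ≠ g * h := fun e => hg (mul_eq_right.mp e.symm)
    rw [elemCob, mul_assoc, charMap_mul_charMap_of_ne hne]
    split_ifs <;> push_cast <;> ring

variable (ρ : G → G → ℤ) (S : Finset G)

def cobTwist (x : S → ℕ) (g h : G) : ℤ :=
  ρ g h * ∏ d : S, elemCob (d : G) g h ^ x d

variable {ρ S}

lemma IsSignCocycle.cobTwist (hρ : IsSignCocycle ρ) (x : S → ℕ) :
    IsSignCocycle (cobTwist ρ S x) :=
  hρ.mul (IsSignCocycle.prod _ fun d _ => (isSignCocycle_elemCob (d : G)).pow (x d))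

lemma cobTwist_mul_left_of_mul_self {g : G} (hg : g * g = 1) (hρ : ∀ h, ρ g (g * h) = -ρ g h)
    (x : S → ℕ) (h : G) : cobTwist ρ S x g (g * h) = -cobTwist ρ S x g h := by
  simp only [cobTwist, hρ, elemCob_mul_left_of_mul_self _ hg, neg_mul]

variable [Fintype G]

variable (ρ S) in
noncomputable def rowPoly (g : G) : MvPolynomial S ℚ :=
  ∑ h, C (ρ g h : ℚ) * ∏ d : S, if (d : G) = h ∨ (d : G) = g * h then 1 - 2 * X d else 1

variable {x : S → ℕ}

lemma sum_cobTwist_eq (hx : ∀ d, x d = 0 ∨ x d = 1) {g : G} (hg : g ≠ 1) :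
    ((∑ h, cobTwist ρ S x g h : ℤ) : ℚ) =
      (∏ d : S, (charMap (d : G) g : ℚ) ^ x d) * eval (fun d => (x d : ℚ)) (rowPoly ρ S g) := by
  simp only [cobTwist, rowPoly, Int.cast_sum, Int.cast_mul, Int.cast_prod, Int.cast_pow, map_sum,
    map_mul, eval_C, map_prod, Finset.mul_sum]
  refine Finset.sum_congr rfl fun h _ => ?_
  simp only [fun d : S => elemCob_cast_pow hg h (hx d), Finset.prod_mul_distrib, apply_ite (eval _),
    map_sub, map_one, map_mul, eval_X, map_ofNat]
  ring

lemma sum_cobTwist_eq_zero_iff (hx : ∀ d, x d = 0 ∨ x d = 1) {g : G} (hg : g ≠ 1) :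
    ∑ h, cobTwist ρ S x g h = 0 ↔ eval (fun d => (x d : ℚ)) (rowPoly ρ S g) = 0 := by
  have hsign : (∏ d : S, (charMap (d : G) g : ℚ) ^ x d) ≠ 0 :=
    Finset.prod_ne_zero_iff.mpr fun _ _ => pow_ne_zero _ (Int.cast_ne_zero.mpr (charMap_ne_zero _ _))
  rw [← Int.cast_eq_zero (α := ℚ), sum_cobTwist_eq hx hg, mul_eq_zero, or_iff_right hsign]

end Coboundary

namespace ZMod

variable {n : ℕ} [NeZero n]

lemma val_add_eq_ite (a b : ZMod n) :
    (a + b).val = if a.val + b.val < n then a.val + b.val else a.val + b.val - n := by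
  split_ifs with h
  · exact val_add_of_lt h
  · exact val_add_of_le (not_lt.mp h)

lemma val_neg_eq_ite (a : ZMod n) : (-a).val = if a.val = 0 then 0 else n - a.val := by
  split_ifs with h
  · rw [(val_eq_zero a).mp h, neg_zero, val_zero]
  · have : NeZero a := ⟨fun ha => h (by rw [ha, val_zero])⟩
    exact val_neg_of_ne_zero a

lemma val_natCast_half {t : ℕ} [NeZero (2 * t)] : ((t : ℕ) : ZMod (2 * t)).val = t :=
  val_cast_of_lt (by have := NeZero.ne (2 * t); omega)

end ZMod

namespace DihedralGroup

variable {t : ℕ}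

lemma r_half_mul_self : r (t : ZMod (2 * t)) * r (t : ZMod (2 * t)) = 1 := by
  rw [r_mul_r, ← Nat.cast_add, ← two_mul, ZMod.natCast_self, r_zero]

lemma dihEl_ne_one {s : ℕ} (hs : 2 ≤ s) (hst : s ≤ t) : dihEl t s ≠ 1 := by
  rw [dihEl, if_pos (by omega), ← r_zero]
  intro h
  have := congrArg ZMod.val (r.inj h)
  rw [ZMod.val_cast_of_lt (by omega), ZMod.val_zero] at this
  omega

variable [NeZero (2 * t)]

lemma rhoD_r_r (i j : ZMod (2 * t)) :
    rhoD t (r i) (r j) = if i.val + j.val < 2 * t then 1 else -1 := by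
  have := ZMod.val_lt i; have := ZMod.val_lt j
  simp only [rhoD, rhoIdxD, dihIdx]
  split_ifs <;> first | rfl | omega

lemma rhoD_r_sr (i j : ZMod (2 * t)) :
    rhoD t (r i) (sr j) = if i.val + (-j).val < 2 * t then 1 else -1 := by
  have := ZMod.val_lt i; have := ZMod.val_lt (-j)
  simp only [rhoD, rhoIdxD, dihIdx]
  split_ifs <;> first | rfl | omega

lemma rhoD_sr_r (i j : ZMod (2 * t)) :
    rhoD t (sr i) (r j) = if j.val ≤ (-i).val then 1 else -1 := by
  have := ZMod.val_lt (-i); have := ZMod.val_lt j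
  simp only [rhoD, rhoIdxD, dihIdx]
  split_ifs <;> first | rfl | omega

lemma rhoD_sr_sr (i j : ZMod (2 * t)) :
    rhoD t (sr i) (sr j) = if (-j).val ≤ (-i).val then -1 else 1 := by
  have := ZMod.val_lt (-i); have := ZMod.val_lt (-j)
  simp only [rhoD, rhoIdxD, dihIdx]
  split_ifs <;> first | rfl | omega

set_option maxHeartbeats 1000000 in
lemma isSignCocycle_rhoD : IsSignCocycle (rhoD t) where
  mul_self g h := by
    unfold rhoD rhoIdxD; split_ifs <;> norm_num
  cocycle g h k := by
    obtain ⟨i⟩ | ⟨i⟩ := g <;> obtain ⟨j⟩ | ⟨j⟩ := h <;> obtain ⟨l⟩ | ⟨l⟩ := k <;>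
      simp only [r_mul_r, r_mul_sr, sr_mul_r, sr_mul_sr, rhoD_r_r, rhoD_r_sr, rhoD_sr_r,
        rhoD_sr_sr, sub_eq_add_neg, neg_add_rev, neg_neg, ZMod.val_add_eq_ite,
        ZMod.val_neg_eq_ite] <;>
      have := ZMod.val_lt i <;> have := ZMod.val_lt j <;> have := ZMod.val_lt l <;>
      split_ifs <;> first | rfl | omega

lemma rhoD_sr_mul_left (i : ZMod (2 * t)) (h : DihedralGroup (2 * t)) :
    rhoD t (sr i) (sr i * h) = -rhoD t (sr i) h := by
  have := ZMod.val_lt i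
  obtain ⟨j⟩ | ⟨j⟩ := h <;>
    simp only [sr_mul_r, sr_mul_sr, rhoD_sr_r, rhoD_sr_sr, sub_eq_add_neg, neg_add_rev,
      ZMod.val_add_eq_ite, ZMod.val_neg_eq_ite] <;>
    have := ZMod.val_lt j <;>
    split_ifs <;> first | rfl | omega

lemma rhoD_r_half_mul_left (h : DihedralGroup (2 * t)) :
    rhoD t (r t) (r t * h) = -rhoD t (r t) h := by
  obtain ⟨j⟩ | ⟨j⟩ := h <;>
    simp only [r_mul_r, r_mul_sr, rhoD_r_r, rhoD_r_sr, sub_eq_add_neg, neg_add_rev, neg_neg,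
      ZMod.val_add_eq_ite, ZMod.val_neg_eq_ite, ZMod.val_natCast_half] <;>
    have := ZMod.val_lt j <;>
    split_ifs <;> first | rfl | omega

theorem sum_eq_zero_of_forall_sum_r_eq_zero {ψ : DihedralGroup (2 * t) → DihedralGroup (2 * t) → ℤ}
    (hψ : IsSignCocycle ψ) (hflip_r : ∀ h, ψ (r t) (r t * h) = -ψ (r t) h)
    (hflip_sr : ∀ i h, ψ (sr i) (sr i * h) = -ψ (sr i) h)
    (hsmall : ∀ m : ZMod (2 * t), 0 < m.val → m.val < t → ∑ h, ψ (r m) h = 0)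
    {g : DihedralGroup (2 * t)} (hg : g ≠ 1) : ∑ h, ψ g h = 0 := by
  obtain ⟨m⟩ | ⟨i⟩ := g
  · have hm0 : m.val ≠ 0 := fun h => hg (by rw [(ZMod.val_eq_zero m).mp h, r_zero])
    have hm := ZMod.val_lt m
    rcases lt_trichotomy m.val t with hlt | heq | hgt
    · exact hsmall m (by omega) hlt
    · rw [← ZMod.natCast_zmod_val m, heq]
      exact Fintype.sum_eq_zero_of_apply_mul_left_eq_neg _ hflip_r
    · have hneg := ZMod.val_neg_eq_ite m
      rw [if_neg hm0] at hneg
      simpa [inv_r] using (hψ.sum_inv_eq_zero (hsmall (-m) (by omega) (by omega)))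
  · exact Fintype.sum_eq_zero_of_apply_mul_left_eq_neg _ (hflip_sr i)

lemma dihEl_val_add_one (m : ZMod (2 * t)) : dihEl t (m.val + 1) = r m := by
  have := ZMod.val_lt m
  rw [dihEl, if_pos (by omega), Nat.add_sub_cancel, ZMod.natCast_zmod_val]

lemma rowPolyD_eq (s : ℕ) : rowPolyD t s = rowPoly (rhoD t) (SD t) (dihEl t s) := rfl

theorem cobTwist_rhoD_mul_transpose_eq_iff {x : SD t → ℕ} (hx : ∀ d, x d = 0 ∨ x d = 1) :
    of (cobTwist (rhoD t) (SD t) x) * (of (cobTwist (rhoD t) (SD t) x))ᵀ = (4 * t : ℤ) • 1 ↔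
      ∀ s, 2 ≤ s → s ≤ t → eval (fun d => (x d : ℚ)) (rowPolyD t s) = 0 := by
  have hψ := isSignCocycle_rhoD.cobTwist x
  have hcard : (Fintype.card (DihedralGroup (2 * t)) : ℤ) = 4 * t := by
    rw [card]; push_cast; ring
  simp only [rowPolyD_eq]
  rw [← hcard, hψ.mul_transpose_eq_card_smul_one_iff]
  constructor
  · intro hrows s hs hst
    exact (sum_cobTwist_eq_zero_iff hx (dihEl_ne_one hs hst)).mp (hrows _ (dihEl_ne_one hs hst))
  · intro hpoly g hg
    refine sum_eq_zero_of_forall_sum_r_eq_zero hψ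
      (cobTwist_mul_left_of_mul_self r_half_mul_self rhoD_r_half_mul_left x)
      (fun i => cobTwist_mul_left_of_mul_self (sr_mul_self i) (rhoD_sr_mul_left i) x)
      (fun m hm hmt => ?_) hg
    have hne := dihEl_ne_one (t := t) (s := m.val + 1) (by omega) (by omega)
    rw [← dihEl_val_add_one, sum_cobTwist_eq_zero_iff hx hne]
    exact hpoly _ (by omega) (by omega)

end DihedralGroup

section BoolPoint

variable {σ : Type*} [DecidableEq σ]

def boolPoint {R : Type*} [Zero R] [One R] (q : Finset σ) : σ → R :=
  fun d => if d ∈ q then 1 else 0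

lemma boolPoint_eq_zero_or_eq_one (q : Finset σ) (d : σ) :
    boolPoint (R := ℕ) q d = 0 ∨ boolPoint q d = 1 := by
  unfold boolPoint; split_ifs <;> simp

lemma natCast_comp_boolPoint {R : Type*} [AddMonoidWithOne R] (q : Finset σ) :
    (fun d => ((boolPoint q d : ℕ) : R)) = boolPoint q := by
  funext d; unfold boolPoint; split_ifs <;> simp

variable [Fintype σ]

lemma boolPoint_filter_eq_one {x : σ → ℕ} (hx : ∀ d, x d = 0 ∨ x d = 1) :
    boolPoint ({d | x d = 1} : Finset σ) = x := by
  funext d; unfold boolPoint; rcases hx d with h | h <;> simp [h]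

lemma filter_boolPoint_eq_one (q : Finset σ) :
    ({d | boolPoint (R := ℕ) q d = 1} : Finset σ) = q := by
  ext d; by_cases h : d ∈ q <;> simp [boolPoint, h]

lemma card_boolTuples (p : (σ → ℕ) → Prop) :
    Nat.card {x : σ → ℕ // (∀ d, x d = 0 ∨ x d = 1) ∧ p x} =
      Nat.card {q : Finset σ // p (boolPoint q)} :=
  Nat.card_congr
    { toFun x := ⟨({d | x.1 d = 1} : Finset σ), by rw [boolPoint_filter_eq_one x.2.1]; exact x.2.2⟩
      invFun q := ⟨boolPoint q.1, boolPoint_eq_zero_or_eq_one q.1, q.2⟩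
      left_inv x := Subtype.ext (boolPoint_filter_eq_one x.2.1)
      right_inv q := Subtype.ext (filter_boolPoint_eq_one q.1) }

end BoolPoint

namespace MvPolynomial

variable {σ K : Type*} [Field K]

variable (σ K) in
noncomputable def boolIdeal : Ideal (MvPolynomial σ K) :=
  Ideal.span {p | ∃ d, p = X d ^ 2 - X d}

variable [DecidableEq σ]

noncomputable def evalOnBoolZeros (P : Set (MvPolynomial σ K)) :
    MvPolynomial σ K →ₐ[K] ({q : Finset σ // ∀ f ∈ P, eval (boolPoint q) f = 0} → K) :=
  AlgHom.pi fun q => aeval (boolPoint q.1)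

lemma evalOnBoolZeros_apply (P : Set (MvPolynomial σ K)) (p : MvPolynomial σ K) q :
    evalOnBoolZeros P p q = eval (boolPoint q.1) p := by
  simp [evalOnBoolZeros, aeval_eq_eval]

variable [Fintype σ]

variable (K) in
noncomputable def boolIdempotent (q : Finset σ) : MvPolynomial σ K :=
  (∏ d ∈ q, X d) * ∏ d ∈ qᶜ, (1 - X d)

lemma sum_boolIdempotent : ∑ q : Finset σ, boolIdempotent K q = 1 := by
  simp only [boolIdempotent, ← Fintype.prod_add, add_sub_cancel, Finset.prod_const_one]

lemma X_mul_boolIdempotent_sub_mem (q : Finset σ) (i : σ) :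
    X i * boolIdempotent K q - C (boolPoint q i) * boolIdempotent K q ∈ boolIdeal σ K := by
  have hgen : (X i ^ 2 - X i : MvPolynomial σ K) ∈ boolIdeal σ K := Ideal.subset_span ⟨i, rfl⟩
  by_cases hi : i ∈ q
  · convert Ideal.mul_mem_right ((∏ d ∈ q.erase i, X d) * ∏ d ∈ qᶜ, (1 - X d)) _ hgen using 1
    rw [boolIdempotent, boolPoint, if_pos hi, C_1, ← Finset.mul_prod_erase q _ hi]
    ring
  · have hi' : i ∈ qᶜ := Finset.mem_compl.mpr hi
    convert Ideal.mul_mem_right (-(∏ d ∈ q, X d) * ∏ d ∈ qᶜ.erase i, (1 - X d)) _ hgen using 1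
    rw [boolIdempotent, boolPoint, if_neg hi, C_0, ← Finset.mul_prod_erase qᶜ _ hi']
    ring

lemma mul_boolIdempotent_sub_mem (f : MvPolynomial σ K) (q : Finset σ) :
    f * boolIdempotent K q - C (eval (boolPoint q) f) * boolIdempotent K q ∈ boolIdeal σ K := by
  induction f using MvPolynomial.induction_on with
  | C a => simp
  | add f g hf hg =>
    convert add_mem hf hg using 1
    simp only [map_add]
    ring
  | mul_X f i hf =>
    convert add_mem (Ideal.mul_mem_left _ (X i) hf)
      (Ideal.mul_mem_left _ (C (eval (boolPoint q) f)) (X_mul_boolIdempotent_sub_mem q i)) using 1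
    simp only [map_mul, eval_X]
    ring

lemma sub_sum_boolIdempotent_mem (f : MvPolynomial σ K) :
    f - ∑ q : Finset σ, C (eval (boolPoint q) f) * boolIdempotent K q ∈ boolIdeal σ K := by
  have : f - ∑ q : Finset σ, C (eval (boolPoint q) f) * boolIdempotent K q =
      ∑ q : Finset σ, (f * boolIdempotent K q - C (eval (boolPoint q) f) * boolIdempotent K q) := by
    rw [Finset.sum_sub_distrib, ← Finset.mul_sum, sum_boolIdempotent, mul_one]
  rw [this]
  exact Ideal.sum_mem _ fun q _ => mul_boolIdempotent_sub_mem f q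

lemma eval_boolIdempotent (q r : Finset σ) :
    eval (boolPoint r) (boolIdempotent K q) = if q = r then 1 else 0 := by
  simp only [boolIdempotent, boolPoint, map_mul, map_prod, map_sub, map_one, eval_X]
  split_ifs with h
  · subst h
    rw [Finset.prod_eq_one fun d hd => if_pos hd, one_mul]
    exact Finset.prod_eq_one fun d hd => by rw [if_neg (Finset.mem_compl.mp hd), sub_zero]
  · obtain ⟨d, hd⟩ : ∃ d, ¬(d ∈ q ↔ d ∈ r) := by
      by_contra! hc
      exact h (Finset.ext hc)
    by_cases hdq : d ∈ q
    · have hdr : d ∉ r := fun hdr => hd (iff_of_true hdq hdr)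
      exact mul_eq_zero_of_left (Finset.prod_eq_zero hdq (if_neg hdr)) _
    · have hdr : d ∈ r := by tauto
      exact mul_eq_zero_of_right _
        (Finset.prod_eq_zero (Finset.mem_compl.mpr hdq) (by rw [if_pos hdr, sub_self]))

lemma boolIdempotent_mem_of_eval_ne_zero {I : Ideal (MvPolynomial σ K)} (hI : boolIdeal σ K ≤ I)
    {f : MvPolynomial σ K} (hf : f ∈ I) {q : Finset σ} (hq : eval (boolPoint q) f ≠ 0) :
    boolIdempotent K q ∈ I := by
  have h₁ : C (eval (boolPoint q) f) * boolIdempotent K q ∈ I := by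
    simpa using I.sub_mem (I.mul_mem_right (boolIdempotent K q) hf)
      (hI (mul_boolIdempotent_sub_mem f q))
  simpa [← mul_assoc, ← C_mul, inv_mul_cancel₀ hq] using
    I.mul_mem_left (C (eval (boolPoint q) f)⁻¹) h₁

variable (P : Set (MvPolynomial σ K))

lemma evalOnBoolZeros_surjective : Function.Surjective (evalOnBoolZeros P) := by
  classical
  intro u
  refine ⟨∑ q, C (u q) * boolIdempotent K q.1, ?_⟩
  funext r
  simp [evalOnBoolZeros_apply, eval_boolIdempotent, ← Subtype.ext_iff]

theorem ker_evalOnBoolZeros :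
    RingHom.ker (evalOnBoolZeros P) = Ideal.span ({p | ∃ d, p = X d ^ 2 - X d} ∪ P) := by
  set I := Ideal.span ({p | ∃ d, p = X d ^ 2 - X d} ∪ P)
  have hbool : boolIdeal σ K ≤ I := Ideal.span_mono Set.subset_union_left
  refine le_antisymm (fun p hp => ?_) (Ideal.span_le.mpr ?_)
  · rw [← sub_add_cancel p (∑ q : Finset σ, C (eval (boolPoint q) p) * boolIdempotent K q)]
    refine I.add_mem (hbool (sub_sum_boolIdempotent_mem p)) (I.sum_mem fun q _ => ?_)
    by_cases hq : ∀ f ∈ P, eval (boolPoint q) f = 0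
    · have : eval (boolPoint q) p = 0 := by
        simpa [evalOnBoolZeros_apply] using congrFun (RingHom.mem_ker.mp hp) ⟨q, hq⟩
      simp [this]
    · push Not at hq
      obtain ⟨f, hfP, hf⟩ := hq
      exact I.mul_mem_left _
        (boolIdempotent_mem_of_eval_ne_zero hbool (Ideal.subset_span (Or.inr hfP)) hf)
  · rintro p (⟨d, rfl⟩ | hp) <;> rw [SetLike.mem_coe, RingHom.mem_ker] <;> funext q
    · simp only [evalOnBoolZeros_apply, map_sub, map_pow, eval_X, boolPoint]
      split_ifs <;> simp
    · exact (evalOnBoolZeros_apply P p q).trans (q.2 p hp)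

theorem finrank_quotient_span_eq_card :
    Module.finrank K (MvPolynomial σ K ⧸ Ideal.span ({p | ∃ d, p = X d ^ 2 - X d} ∪ P)) =
      Nat.card {q : Finset σ // ∀ f ∈ P, eval (boolPoint q) f = 0} := by
  classical
  rw [← ker_evalOnBoolZeros,
    (Ideal.quotientKerAlgEquivOfSurjective (evalOnBoolZeros_surjective P)).toLinearEquiv.finrank_eq,
    Module.finrank_fintype_fun_eq_card, Nat.card_eq_fintype_card]

end MvPolynomial

theorem card_hadamard_tuples_D_eq_finrank_general (t : ℕ) [NeZero (2 * t)] :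
    Nat.card {x : {d : DihedralGroup (2 * t) // d ∈ SD t} → ℕ //
        (∀ d, x d = 0 ∨ x d = 1) ∧
        (Matrix.of fun g h : DihedralGroup (2 * t) =>
              rhoD t g h *
                ∏ d : {d : DihedralGroup (2 * t) // d ∈ SD t},
                  elemCob (d : DihedralGroup (2 * t)) g h ^ x d) *
            (Matrix.of fun g h : DihedralGroup (2 * t) =>
              rhoD t g h *
                ∏ d : {d : DihedralGroup (2 * t) // d ∈ SD t},
                  elemCob (d : DihedralGroup (2 * t)) g h ^ x d)ᵀ =
          (4 * t : ℤ) • (1 : Matrix (DihedralGroup (2 * t)) (DihedralGroup (2 * t)) ℤ)} =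
      Module.finrank ℚ
        (MvPolynomial {d : DihedralGroup (2 * t) // d ∈ SD t} ℚ ⧸ idealD t) := by
  rw [idealD, MvPolynomial.finrank_quotient_span_eq_card, card_boolTuples]
  refine Nat.card_congr (Equiv.subtypeEquivRight fun q => ?_)
  refine (DihedralGroup.cobTwist_rhoD_mul_transpose_eq_iff (boolPoint_eq_zero_or_eq_one q)).trans ?_
  rw [natCast_comp_boolPoint]
  exact ⟨fun h f ⟨s, hs, hst, hf⟩ => hf ▸ h s hs hst, fun h s hs hst => h _ ⟨s, hs, hst, rfl⟩⟩

/-- the number of `{0,1}`-tuples whose associated cocyclic matrix over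
`D_{4t}` is Hadamard equals `dim_ℚ (ℚ[x_d : d ∈ S]/J_{D_{4t}})`. -/
theorem card_hadamard_tuples_D_eq_finrank (t : ℕ) [NeZero (2 * t)] (ht : 2 < t) :
    Nat.card {x : {d : DihedralGroup (2 * t) // d ∈ SD t} → ℕ //
        (∀ d, x d = 0 ∨ x d = 1) ∧
        (Matrix.of fun g h : DihedralGroup (2 * t) =>
              rhoD t g h *
                ∏ d : {d : DihedralGroup (2 * t) // d ∈ SD t},
                  elemCob (d : DihedralGroup (2 * t)) g h ^ x d) *
            (Matrix.of fun g h : DihedralGroup (2 * t) =>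
              rhoD t g h *
                ∏ d : {d : DihedralGroup (2 * t) // d ∈ SD t},
                  elemCob (d : DihedralGroup (2 * t)) g h ^ x d)ᵀ =
          (4 * t : ℤ) • (1 : Matrix (DihedralGroup (2 * t)) (DihedralGroup (2 * t)) ℤ)} =
      Module.finrank ℚ
        (MvPolynomial {d : DihedralGroup (2 * t) // d ∈ SD t} ℚ ⧸ idealD t) :=
  card_hadamard_tuples_D_eq_finrank_general t
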